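/- Let G be a finite simple cubic (3-regular) bipartite graph with bipartition (X, Y) that is essentially 4-edge-connected, i.e., G is 3-connected and every edge cut of G consisting of exactly three edges is the set of the three edges incident with a single vertex. Let x ∈ X and y ∈ Y. Then the induced subgraph of G on V(G) \ (N[x] ∪ N[y]) has a perfect matching, where N[v] = {v} ∪ N(v) denotes the closed neighborhood of v. -/

import Mathlib

open SimpleGraph

/-- `G` is `k`-connected: it has more than `k` vertices and remains connected
after deleting any set of fewer than `k` vertices. -/
def IsKConnected {V : Type*} [Fintype V] (G : SimpleGraph V) (k : ℕ) : Prop :=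
  k + 1 ≤ Fintype.card V ∧ ∀ s : Set V, s.ncard < k → (G.induce sᶜ).Connected

/-- A 3-connected cubic graph is essentially 4-edge-connected: every edge cut
consisting of exactly three edges is the set of edges incident with a single vertex. -/
def EssentiallyFourEdgeConnected {V : Type*} [Fintype V] (G : SimpleGraph V) : Prop :=
  IsKConnected G 3 ∧
    ∀ S : Set (Sym2 V), S ⊆ G.edgeSet → S.ncard = 3 →
      ¬ (G.deleteEdges S).Connected → ∃ v : V, S = G.incidenceSet v

/-- `(X, Y)` is a bipartition of `G`. -/
def IsBipartition {V : Type*} (G : SimpleGraph V) (X Y : Set V) : Prop :=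
  X ∪ Y = Set.univ ∧ Disjoint X Y ∧
    ∀ ⦃u v : V⦄, G.Adj u v → (u ∈ X ∧ v ∈ Y) ∨ (u ∈ Y ∧ v ∈ X)

/-!
Put `D = N[x] ∪ N[y]`. The graph `G - D` is bipartite with sides `X \ D` and `Y \ D`, so by
Hall's theorem it suffices that every `S ⊆ X \ D` has at least `|S|` neighbours outside `D`, and
symmetrically for `Y` (which also forces `|X \ D| = |Y \ D|`).

Let `P = S ∪ {x}`. A neighbour of `S` inside `D` must lie in `N(x)`, so `|N(P)| ≤ |N(S) \ D| + 3`.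
In a cubic bipartite graph exactly `3 (|N(P)| - |P|)` edges leave `P ∪ N(P)`, and at least two
vertices of `N(y)` lie outside it. By connectivity this cut is nonempty; it has no three edges
either, since a 3-edge cut is the star of a vertex `v`, and then no edge would leave
`P ∪ N(P) ∪ {v}`. Hence `|N(P)| ≥ |P| + 2 = |S| + 3`.
-/

open Finset

lemma IsKConnected.connected {V : Type*} [Fintype V] {G : SimpleGraph V} {k : ℕ}
    (h : IsKConnected G k) (hk : 0 < k) : G.Connected := by
  have h_empty := h.2 ∅ (by simpa using hk)
  rw [Set.compl_empty] at h_empty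
  exact (induceUnivIso G).connected_iff.mp h_empty

lemma IsBipartition.isBipartiteWith {V : Type*} {G : SimpleGraph V} {X Y : Set V}
    (h : IsBipartition G X Y) : G.IsBipartiteWith X Y :=
  ⟨h.2.1, h.2.2⟩

namespace SimpleGraph

variable {V : Type*} {G : SimpleGraph V} [DecidableRel G.Adj]

lemma card_interedges_comm (s t : Finset V) :
    #(G.interedges s t) = #(G.interedges t s) :=
  have := G.symm
  Rel.card_interedges_comm s t

lemma exists_isMatching_of_forall_card_le [DecidableEq V] {A B : Finset V} (hAB : Disjoint A B)
    (hall : ∀ S ⊆ A, #S ≤ #{b ∈ B | ∃ a ∈ S, G.Adj a b}) (hBA : #B ≤ #A) :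
    ∃ M : G.Subgraph, M.verts = ↑A ∪ ↑B ∧ M.IsMatching := by
  obtain ⟨f, hf_inj, hf⟩ := (all_card_le_biUnion_card_iff_exists_injective
      fun a : A => {b ∈ B | G.Adj a b}).mp fun s => by
    have := hall (s.map (Function.Embedding.subtype _)) fun b hb => by
      obtain ⟨a, -, rfl⟩ := mem_map.mp hb
      exact a.2
    rw [card_map] at this
    convert this using 2
    ext b
    simp only [mem_biUnion, mem_filter, Subtype.exists, exists_and_right, mem_map,
      Function.Embedding.subtype_apply, exists_eq_right]
    tauto
  let g : A → B := fun a => ⟨f a, (mem_filter.mp (hf a)).1⟩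
  have hg_inj : Function.Injective g := fun a a' h => hf_inj (congrArg Subtype.val h)
  have hg : Function.Bijective g := (Fintype.bijective_iff_injective_and_card g).mpr
    ⟨hg_inj, le_antisymm (Fintype.card_le_of_injective g hg_inj) (by simpa using hBA)⟩
  exact Subgraph.IsMatching.exists_of_disjoint_sets_of_equiv (disjoint_coe.mpr hAB)
    (Equiv.ofBijective g hg) fun a => (mem_filter.mp (hf a)).2

variable [Fintype V] [DecidableEq V]

variable (G) in
def closedNeighborFinset (v : V) : Finset V := insert v (G.neighborFinset v)

@[simp]
lemma mem_closedNeighborFinset {v w : V} : w ∈ G.closedNeighborFinset v ↔ w = v ∨ G.Adj v w := by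
  rw [closedNeighborFinset, mem_insert, mem_neighborFinset]

lemma coe_closedNeighborFinset (v : V) :
    (G.closedNeighborFinset v : Set V) = insert v (G.neighborSet v) := by
  ext
  simp

lemma card_interedges_eq_sum (s t : Finset V) :
    #(G.interedges s t) = ∑ v ∈ s, #(G.neighborFinset v ∩ t) := by
  rw [interedges_def, card_filter, sum_product]
  refine sum_congr rfl fun v _ => ?_
  rw [← card_filter, inter_comm, ← filter_mem_eq_inter]
  simp only [mem_neighborFinset]

lemma card_interedges_compl_add_mul_card {d : ℕ} (hreg : G.IsRegularOfDegree d) {P Q : Finset V}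
    (hPQ : Disjoint P Q) (hP : ∀ p ∈ P, G.neighborFinset p ⊆ Q)
    (hQ : ∀ q ∈ Q, Disjoint (G.neighborFinset q) Q) :
    #(G.interedges (P ∪ Q) (P ∪ Q)ᶜ) + d * #P = d * #Q := by
  have hP_out : ∀ p ∈ P, #(G.neighborFinset p ∩ (P ∪ Q)ᶜ) = 0 := fun p hp => by
    rw [card_eq_zero, ← disjoint_iff_inter_eq_empty]
    exact disjoint_compl_right_iff.mpr ((hP p hp).trans subset_union_right)
  have hQ_split : ∀ q ∈ Q,
      #(G.neighborFinset q ∩ (P ∪ Q)ᶜ) + #(G.neighborFinset q ∩ P) = d := fun q hq => by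
    rw [← hreg.degree_eq q, ← card_neighborFinset_eq_degree, ← card_sdiff_add_card_inter
      (G.neighborFinset q) (P ∪ Q), inter_union_distrib_left,
      disjoint_iff_inter_eq_empty.mp (hQ q hq), union_empty, sdiff_eq_inter_compl]
  have hPQ_edges : d * #P = ∑ q ∈ Q, #(G.neighborFinset q ∩ P) := by
    calc d * #P = ∑ p ∈ P, #(G.neighborFinset p ∩ Q) := by
          rw [sum_congr rfl fun p hp => by
            rw [inter_eq_left.mpr (hP p hp), card_neighborFinset_eq_degree, hreg.degree_eq],
            sum_const, smul_eq_mul, mul_comm]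
      _ = ∑ q ∈ Q, #(G.neighborFinset q ∩ P) := by
          rw [← card_interedges_eq_sum, card_interedges_comm, card_interedges_eq_sum]
  calc #(G.interedges (P ∪ Q) (P ∪ Q)ᶜ) + d * #P
      = ∑ q ∈ Q, #(G.neighborFinset q ∩ (P ∪ Q)ᶜ) + ∑ q ∈ Q, #(G.neighborFinset q ∩ P) := by
        rw [card_interedges_eq_sum, sum_union hPQ, sum_eq_zero hP_out, zero_add, hPQ_edges]
    _ = d * #Q := by
        rw [← sum_add_distrib, sum_congr rfl hQ_split, sum_const, smul_eq_mul, mul_comm]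

variable (G) in
def edgeBoundary (W : Finset V) : Set (Sym2 V) :=
  (fun e : V × V ↦ s(e.1, e.2)) '' (G.interedges W Wᶜ : Set (V × V))

lemma edgeBoundary_subset_edgeSet (W : Finset V) : G.edgeBoundary W ⊆ G.edgeSet := by
  rintro _ ⟨e, he, rfl⟩
  exact (G.mem_interedges_iff.mp (mem_coe.mp he)).2.2

lemma mk_mem_edgeBoundary_iff {W : Finset V} {a b : V} :
    s(a, b) ∈ G.edgeBoundary W ↔ G.Adj a b ∧ (a ∈ W ↔ b ∉ W) := by
  constructor
  · rintro ⟨⟨c, d⟩, hcd, he⟩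
    rw [mem_coe, mk_mem_interedges_iff, mem_compl] at hcd
    rcases Sym2.eq_iff.mp he with ⟨rfl, rfl⟩ | ⟨rfl, rfl⟩
    · exact ⟨hcd.2.2, by tauto⟩
    · exact ⟨hcd.2.2.symm, by tauto⟩
  · rintro ⟨hab, hW⟩
    by_cases ha : a ∈ W
    · exact ⟨(a, b), by simp [mk_mem_interedges_iff, ha, hW.mp ha, hab], rfl⟩
    · exact ⟨(b, a), by simp [mk_mem_interedges_iff, ha, not_not.mp (mt hW.mpr ha), hab.symm],
        Sym2.eq_swap⟩

lemma ncard_edgeBoundary (W : Finset V) :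
    (G.edgeBoundary W).ncard = #(G.interedges W Wᶜ) := by
  rw [edgeBoundary, Set.InjOn.ncard_image, Set.ncard_coe_finset]
  rintro ⟨a, b⟩ hab ⟨c, d⟩ hcd he
  rw [mem_coe, mk_mem_interedges_iff] at hab hcd
  rcases Sym2.eq_iff.mp he with ⟨rfl, rfl⟩ | ⟨rfl, rfl⟩
  · rfl
  · exact absurd hcd.1 (mem_compl.mp hab.2.1)

lemma not_connected_deleteEdges_edgeBoundary {W : Finset V} {a b : V} (ha : a ∈ W) (hb : b ∉ W) :
    ¬ (G.deleteEdges (G.edgeBoundary W)).Connected := by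
  intro hconn
  obtain ⟨d, -, hd, hd'⟩ := (hconn.preconnected a b).some.exists_boundary_dart (W : Set V) ha hb
  have hadj := d.adj
  rw [deleteEdges_adj] at hadj
  exact hadj.2 (mk_mem_edgeBoundary_iff.mpr ⟨hadj.1, iff_of_true hd hd'⟩)

lemma card_interedges_compl_ne_zero (hG : G.Connected) {W : Finset V} {a b : V} (ha : a ∈ W)
    (hb : b ∉ W) : #(G.interedges W Wᶜ) ≠ 0 := by
  intro h
  rw [← ncard_edgeBoundary, Set.ncard_eq_zero] at h
  exact not_connected_deleteEdges_edgeBoundary ha hb (by rwa [h, deleteEdges_empty])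

lemma card_interedges_compl_ne_three (hess : EssentiallyFourEdgeConnected G) {W : Finset V}
    (hW : ∀ w ∈ W, ∃ w' ∈ W, G.Adj w w') (hWc : 1 < #Wᶜ) :
    #(G.interedges W Wᶜ) ≠ 3 := by
  intro h3
  have hG := hess.1.connected three_pos
  obtain ⟨⟨a, b⟩, hab⟩ := card_pos.mp (h3 ▸ three_pos : 0 < #(G.interedges W Wᶜ))
  rw [mk_mem_interedges_iff, mem_compl] at hab
  obtain ⟨v, hv⟩ := hess.2 _ (edgeBoundary_subset_edgeSet W) (by rw [ncard_edgeBoundary, h3])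
    (not_connected_deleteEdges_edgeBoundary hab.1 hab.2.1)
  have hboundary : ∀ c d, G.Adj c d → (c ∈ W ↔ d ∉ W) → v = c ∨ v = d := fun c d hcd hW' =>
    ((mk'_mem_incidenceSet_iff G).mp (hv ▸ mk_mem_edgeBoundary_iff.mpr ⟨hcd, hW'⟩)).2
  have hstar : ∀ d, G.Adj v d → (v ∈ W ↔ d ∉ W) := fun d hvd =>
    (mk_mem_edgeBoundary_iff.mp (hv ▸ (mk'_mem_incidenceSet_iff G).mpr ⟨hvd, Or.inl rfl⟩)).2
  have hvW : v ∉ W := fun hvW => by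
    obtain ⟨w', hw', hvw'⟩ := hW v hvW
    exact (hstar w' hvw').mp hvW hw'
  -- every edge at `v` leads into `W`, so no edge leaves `insert v W`
  obtain ⟨u, hu, huv⟩ := exists_mem_ne hWc v
  refine card_interedges_compl_ne_zero hG (mem_insert_self v W)
    (b := u) (by simp [huv, mem_compl.mp hu]) (card_eq_zero.mpr ?_)
  refine eq_empty_of_forall_notMem fun ⟨c, d⟩ hcd => ?_
  simp only [mk_mem_interedges_iff, mem_compl, mem_insert, not_or] at hcd
  obtain ⟨hc | hc, ⟨hdv, hdW⟩, hcd⟩ := hcd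
  · subst hc
    exact hdW (by_contra fun h => hvW ((hstar d hcd).mpr h))
  · rcases hboundary c d hcd (iff_of_true hc hdW) with rfl | rfl
    · exact hvW hc
    · exact hdv rfl

lemma IsBipartiteWith.coe_biUnion_neighborFinset_subset {X Y : Set V} (hbip : G.IsBipartiteWith X Y)
    {P : Finset V} (hPX : ↑P ⊆ X) : ↑(P.biUnion (G.neighborFinset ·)) ⊆ Y := by
  intro q hq
  obtain ⟨p, hp, hpq⟩ := mem_biUnion.mp (mem_coe.mp hq)
  exact hbip.mem_of_mem_adj (hPX hp) ((mem_neighborFinset _ _ _).mp hpq)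

theorem card_add_two_le_card_biUnion_neighborFinset (hreg : G.IsRegularOfDegree 3)
    (hess : EssentiallyFourEdgeConnected G) {X Y : Set V} (hbip : G.IsBipartiteWith X Y)
    {P : Finset V} (hPX : ↑P ⊆ X) (hP : P.Nonempty)
    (hout : 1 < #(P ∪ P.biUnion (G.neighborFinset ·))ᶜ) :
    #P + 2 ≤ #(P.biUnion (G.neighborFinset ·)) := by
  set Q := P.biUnion (G.neighborFinset ·)
  have hQY : ↑Q ⊆ Y := hbip.coe_biUnion_neighborFinset_subset hPX
  have hPQ : Disjoint P Q :=
    Finset.disjoint_left.mpr fun _ hp hq => Set.disjoint_left.mp hbip.disjoint (hPX hp) (hQY hq)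
  have hQ_indep : ∀ q ∈ Q, Disjoint (G.neighborFinset q) Q := fun q hq =>
    Finset.disjoint_left.mpr fun _ hb hb' => Set.disjoint_left.mp hbip.disjoint
      (hbip.symm.mem_of_mem_adj (hQY hq) ((mem_neighborFinset _ _ _).mp hb)) (hQY hb')
  have hW : ∀ w ∈ P ∪ Q, ∃ w' ∈ P ∪ Q, G.Adj w w' := by
    intro w hw
    rcases mem_union.mp hw with hwP | hwQ
    · obtain ⟨w', hw'⟩ : (G.neighborFinset w).Nonempty := by
        rw [← card_pos, card_neighborFinset_eq_degree, hreg.degree_eq]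
        exact three_pos
      exact ⟨w', mem_union_right _ (subset_biUnion_of_mem _ hwP hw'),
        (mem_neighborFinset _ _ _).mp hw'⟩
    · obtain ⟨p, hp, hpw⟩ := mem_biUnion.mp hwQ
      exact ⟨p, mem_union_left _ hp, ((mem_neighborFinset _ _ _).mp hpw).symm⟩
  obtain ⟨a, ha⟩ := hP
  obtain ⟨b, hb⟩ := card_pos.mp (zero_lt_one.trans hout)
  have hcount := card_interedges_compl_add_mul_card hreg hPQ
    (fun p hp => subset_biUnion_of_mem (G.neighborFinset ·) hp) hQ_indep
  have h0 := card_interedges_compl_ne_zero (hess.1.connected three_pos) (subset_union_left ha)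
    (mem_compl.mp hb)
  have h3 := card_interedges_compl_ne_three hess hW hout
  omega

lemma IsBipartiteWith.biUnion_neighborFinset_insert_subset {X Y : Set V}
    (hbip : G.IsBipartiteWith X Y) {x y : V} (hx : x ∈ X) (hy : y ∈ Y) {S B : Finset V}
    (hSX : ↑S ⊆ X) (hSD : Disjoint S (G.closedNeighborFinset x ∪ G.closedNeighborFinset y))
    (hB : ∀ b ∈ Y, b ∉ G.closedNeighborFinset x ∪ G.closedNeighborFinset y → b ∈ B) :
    (insert x S).biUnion (G.neighborFinset ·) ⊆
      {b ∈ B | ∃ a ∈ S, G.Adj a b} ∪ G.neighborFinset x := by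
  intro b hb
  obtain ⟨p, hp, hpb⟩ := mem_biUnion.mp hb
  rw [mem_neighborFinset] at hpb
  rcases mem_insert.mp hp with rfl | hpS
  · exact mem_union_right _ ((mem_neighborFinset _ _ _).mpr hpb)
  have hbY : b ∈ Y := hbip.mem_of_mem_adj (hSX hpS) hpb
  by_cases hbD : b ∈ G.closedNeighborFinset x ∪ G.closedNeighborFinset y
  · have hpy : ¬ (p = y ∨ G.Adj y p) := fun h =>
      Finset.disjoint_left.mp hSD hpS (mem_union_right _ (mem_closedNeighborFinset.mpr h))
    simp only [mem_union, mem_closedNeighborFinset] at hbD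
    rcases hbD with (rfl | hxb) | (rfl | hyb)
    · exact absurd hbY (Set.disjoint_left.mp hbip.disjoint hx)
    · exact mem_union_right _ ((mem_neighborFinset _ _ _).mpr hxb)
    · exact absurd (Or.inr hpb.symm) hpy
    · exact absurd hbY (Set.disjoint_left.mp hbip.disjoint (hbip.symm.mem_of_mem_adj hy hyb))
  · exact mem_union_left _ (mem_filter.mpr ⟨hB b hbY hbD, p, hpS, hpb⟩)

theorem card_le_card_neighbors_outside_closedNeighborFinsets (hreg : G.IsRegularOfDegree 3)
    (hess : EssentiallyFourEdgeConnected G) {X Y : Set V} (hbip : G.IsBipartiteWith X Y)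
    {x y : V} (hx : x ∈ X) (hy : y ∈ Y) {S B : Finset V} (hSX : ↑S ⊆ X)
    (hSD : Disjoint S (G.closedNeighborFinset x ∪ G.closedNeighborFinset y))
    (hB : ∀ b ∈ Y, b ∉ G.closedNeighborFinset x ∪ G.closedNeighborFinset y → b ∈ B) :
    #S ≤ #{b ∈ B | ∃ a ∈ S, G.Adj a b} := by
  have hxS : x ∉ S := Finset.disjoint_right.mp hSD (by simp)
  have hPX : ↑(insert x S) ⊆ X := by
    rw [coe_insert]
    exact Set.insert_subset hx hSX
  have hout : (G.neighborFinset y).erase x ⊆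
      (insert x S ∪ (insert x S).biUnion (G.neighborFinset ·))ᶜ := by
    intro u hu
    obtain ⟨hux, hyu⟩ := mem_erase.mp hu
    have huX : u ∈ X := hbip.symm.mem_of_mem_adj hy ((mem_neighborFinset _ _ _).mp hyu)
    simp only [mem_compl, mem_union, mem_insert, not_or]
    refine ⟨⟨hux, Finset.disjoint_right.mp hSD (by simp [(mem_neighborFinset _ _ _).mp hyu])⟩,
      fun hu' => Set.disjoint_left.mp hbip.disjoint huX
        (hbip.coe_biUnion_neighborFinset_subset hPX hu')⟩
  have h_expand := card_add_two_le_card_biUnion_neighborFinset hreg hess hbip hPX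
    (insert_nonempty x S) <| calc
      1 < #((G.neighborFinset y).erase x) := by
        have := pred_card_le_card_erase (s := G.neighborFinset y) (a := x)
        rw [card_neighborFinset_eq_degree, hreg.degree_eq] at this
        omega
      _ ≤ _ := card_le_card hout
  have hNP_card := calc
    #((insert x S).biUnion (G.neighborFinset ·))
      ≤ #({b ∈ B | ∃ a ∈ S, G.Adj a b} ∪ G.neighborFinset x) :=
        card_le_card (hbip.biUnion_neighborFinset_insert_subset hx hy hSX hSD hB)
    _ ≤ #{b ∈ B | ∃ a ∈ S, G.Adj a b} + #(G.neighborFinset x) := card_union_le _ _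
    _ = #{b ∈ B | ∃ a ∈ S, G.Adj a b} + 3 := by
        rw [card_neighborFinset_eq_degree, hreg.degree_eq]
  rw [card_insert_of_notMem hxS] at h_expand
  omega

end SimpleGraph

theorem matching_avoiding_closed_neighborhoods
    {V : Type*} [Fintype V] (G : SimpleGraph V) [DecidableRel G.Adj]
    (hcubic : ∀ v : V, G.degree v = 3)
    (X Y : Set V) (hbip : IsBipartition G X Y)
    (hess : EssentiallyFourEdgeConnected G)
    (x y : V) (hx : x ∈ X) (hy : y ∈ Y) :
    ∃ M : G.Subgraph,
      M.verts = (insert x (G.neighborSet x) ∪ insert y (G.neighborSet y))ᶜ ∧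
        M.IsMatching := by
  classical
  have hbip' := hbip.isBipartiteWith
  set D := G.closedNeighborFinset x ∪ G.closedNeighborFinset y
  have hD_comm : G.closedNeighborFinset y ∪ G.closedNeighborFinset x = D := union_comm _ _
  set A : Finset V := {v | v ∈ X ∧ v ∉ D}
  set B : Finset V := {v | v ∈ Y ∧ v ∉ D}
  have hAB : Disjoint A B := disjoint_filter.mpr fun v _ hvA hvB =>
    Set.disjoint_left.mp hbip'.disjoint hvA.1 hvB.1
  have hallA : ∀ S ⊆ A, #S ≤ #{b ∈ B | ∃ a ∈ S, G.Adj a b} := fun S hS =>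
    card_le_card_neighbors_outside_closedNeighborFinsets hcubic hess hbip' hx hy
      (fun a ha => (mem_filter.mp (hS ha)).2.1)
      (Finset.disjoint_left.mpr fun a ha => (mem_filter.mp (hS ha)).2.2)
      fun b hbY hbD => mem_filter.mpr ⟨mem_univ b, hbY, hbD⟩
  have hallB : #B ≤ #{a ∈ A | ∃ b ∈ B, G.Adj b a} :=
    card_le_card_neighbors_outside_closedNeighborFinsets hcubic hess hbip'.symm hy hx
      (fun b hb => (mem_filter.mp hb).2.1)
      (hD_comm ▸ Finset.disjoint_left.mpr fun b hb => (mem_filter.mp hb).2.2)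
      fun a haX haD => mem_filter.mpr ⟨mem_univ a, haX, hD_comm ▸ haD⟩
  obtain ⟨M, hM, hMatch⟩ :=
    exists_isMatching_of_forall_card_le hAB hallA (hallB.trans (card_le_card (filter_subset _ _)))
  have hAB_compl : A ∪ B = Dᶜ := by
    ext v
    have hv : v ∈ X ∨ v ∈ Y := (Set.mem_union v X Y).mp (hbip.1 ▸ Set.mem_univ v)
    simp only [A, B, mem_union, mem_filter, mem_univ, true_and, mem_compl]
    tauto
  refine ⟨M, ?_, hMatch⟩
  rw [hM, ← coe_union, hAB_compl, coe_compl, coe_union, coe_closedNeighborFinset,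
    coe_closedNeighborFinset]
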